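/- Let x_1 ≤ x_2 ≤ ... ≤ x_n be real numbers (n ≥ 1), let m = (1/n)·Σ_{i=1}^n x_i be their mean and s² = (1/n)·Σ_{i=1}^n (x_i − m)² their (population) variance. Then for every k with 1 ≤ k ≤ n, the k-th smallest value satisfies x_k ≤ m + s·√((k−1)/(n−k+1)). -/

import Mathlib

set_option maxHeartbeats 1000000 in
/-- **Order-statistic bound for sorted data.**
If `x 0 ≤ x 1 ≤ ⋯ ≤ x (n-1)` are real numbers (`n ≥ 1`) with mean `m` and population
variance `s²`, then for every `1 ≤ k ≤ n` the `k`-th smallest value `x (k-1)` satisfies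
`x (k-1) ≤ m + s * √((k-1)/(n-k+1))`. -/
theorem kth_smallest_le_mean_add_stddev_mul_sqrt
    (n : ℕ) (hn : 1 ≤ n) (x : Fin n → ℝ) (hx : Monotone x)
    (m s : ℝ)
    (hm : m = (∑ i, x i) / n)
    (hs : s = Real.sqrt ((∑ i, (x i - m) ^ 2) / n))
    (k : ℕ) (hk1 : 1 ≤ k) (hkn : k ≤ n) :
    x ⟨k - 1, by omega⟩ ≤
      m + s * Real.sqrt (((k : ℝ) - 1) / ((n : ℝ) - k + 1)) := by
  have hnR : (0:ℝ) < n := by exact_mod_cast hn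
  set y := x ⟨k - 1, by omega⟩ with hy
  have hs0 : 0 ≤ s := hs ▸ Real.sqrt_nonneg _
  have hsq0 : 0 ≤ Real.sqrt (((k:ℝ)-1)/((n:ℝ)-k+1)) := Real.sqrt_nonneg _
  by_cases hym : y ≤ m
  · nlinarith [mul_nonneg hs0 hsq0]
  push_neg at hym
  set d := y - m with hd
  have hd0 : 0 < d := by simpa [hd] using sub_pos.mpr hym
  -- sum of deviations is zero
  have hsum0 : ∑ i, (x i - m) = 0 := by
    have : ∑ i, (x i - m) = (∑ i, x i) - n * m := by
      rw [Finset.sum_sub_distrib]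
      simp [Finset.card_univ]
    rw [this, hm]
    field_simp
    ring
  -- sum of squares is n * s^2
  have hsq : ∑ i, (x i - m) ^ 2 = n * s ^ 2 := by
    have hnn : 0 ≤ (∑ i, (x i - m) ^ 2) / n := by positivity
    rw [hs, Real.sq_sqrt hnn]
    field_simp
  set K := k - 1 with hK
  have hKk : (K : ℝ) = (k : ℝ) - 1 := by
    have : (K : ℝ) = ((k : ℕ) : ℝ) - 1 := by
      rw [hK]; push_cast [hk1]; ring
    simpa using this
  have hKn : K < n := by omega
  -- case k = 1
  rcases eq_or_lt_of_le hk1 with hk1' | hk2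
  · exfalso
    have hmin : ∀ i : Fin n, y ≤ x i := by
      intro i
      apply hx
      show (⟨k-1, by omega⟩ : Fin n) ≤ i
      simp [Fin.le_def]
      omega
    have : (n : ℝ) * y ≤ ∑ i, x i := by
      calc (n:ℝ) * y = ∑ _i : Fin n, y := by simp [Finset.card_univ, mul_comm]
        _ ≤ ∑ i, x i := Finset.sum_le_sum fun i _ => hmin i
    rw [hm] at hym
    have := (div_lt_iff₀ hnR).mp (by linarith [hym] : (∑ i, x i)/n < y)
    linarith
  -- now k ≥ 2, so K ≥ 1
  have hK1 : 1 ≤ K := by omega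
  set A := Finset.univ.filter (fun i : Fin n => i.val < K) with hA
  set B := Finset.univ.filter (fun i : Fin n => K ≤ i.val) with hB
  have hcardA : A.card = K := by
    have himg : A.image Fin.val = Finset.range K := by
      ext a
      simp only [hA, Finset.mem_image, Finset.mem_filter, Finset.mem_univ, true_and,
        Finset.mem_range]
      constructor
      · rintro ⟨i, hi, rfl⟩; exact hi
      · intro ha; exact ⟨⟨a, by omega⟩, ha, rfl⟩
    rw [← Finset.card_image_of_injective A Fin.val_injective, himg, Finset.card_range]
  have hcardB : B.card = n - K := by
    have himg : B.image Fin.val = Finset.Ico K n := by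
      ext a
      simp only [hB, Finset.mem_image, Finset.mem_filter, Finset.mem_univ, true_and,
        Finset.mem_Ico]
      constructor
      · rintro ⟨i, hi, rfl⟩; exact ⟨hi, i.isLt⟩
      · intro ha; exact ⟨⟨a, ha.2⟩, ha.1, rfl⟩
    rw [← Finset.card_image_of_injective B Fin.val_injective, himg, Nat.card_Ico]
  have hAB : Finset.univ = A ∪ B := by
    ext i; simp [hA, hB]; omega
  have hABdisj : Disjoint A B := by
    rw [hA, hB, Finset.disjoint_filter]
    intro i _ h; omega
  -- each i in B has x i ≥ y
  have hxB : ∀ i ∈ B, d ≤ x i - m := by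
    intro i hi
    rw [hB, Finset.mem_filter] at hi
    have : y ≤ x i := by
      apply hx
      show (⟨k - 1, by omega⟩ : Fin n) ≤ i
      simp [Fin.le_def]
      omega
    simp [hd]; linarith
  have hnK : (0:ℝ) < (n:ℝ) - K := by
    have : (K:ℝ) < n := by exact_mod_cast hKn
    linarith
  have hKR : (0:ℝ) < (K:ℝ) := by exact_mod_cast hK1
  -- sum over B of deviations
  have hSB : ((n:ℝ) - K) * d ≤ ∑ i ∈ B, (x i - m) := by
    calc ((n:ℝ) - K) * d = ∑ _i ∈ B, d := by
          rw [Finset.sum_const, hcardB]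
          have : ((n - K : ℕ) : ℝ) = (n:ℝ) - K := by
            have := hKn.le; push_cast [this]; ring
          rw [nsmul_eq_mul, this]
      _ ≤ ∑ i ∈ B, (x i - m) := Finset.sum_le_sum hxB
  -- sum over A
  have hsplit : ∑ i ∈ A, (x i - m) + ∑ i ∈ B, (x i - m) = 0 := by
    rw [← Finset.sum_union hABdisj, ← hAB]; exact hsum0
  have hSA : ∑ i ∈ A, (x i - m) ≤ -(((n:ℝ) - K) * d) := by linarith
  -- Cauchy-Schwarz on A
  have hCS : (∑ i ∈ A, (x i - m)) ^ 2 ≤ (K:ℝ) * ∑ i ∈ A, (x i - m) ^ 2 := by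
    have := sq_sum_le_card_mul_sum_sq (s := A) (f := fun i => x i - m)
    rw [hcardA] at this
    exact_mod_cast this
  have hA2 : (((n:ℝ) - K) * d) ^ 2 / K ≤ ∑ i ∈ A, (x i - m) ^ 2 := by
    rw [div_le_iff₀ hKR]
    have h1 : (((n:ℝ) - K) * d) ^ 2 ≤ (∑ i ∈ A, (x i - m)) ^ 2 := by
      have h2 : 0 ≤ ((n:ℝ) - K) * d := le_of_lt (mul_pos hnK hd0)
      nlinarith [hSA]
    calc (((n:ℝ)-K)*d)^2 ≤ (∑ i ∈ A, (x i - m))^2 := h1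
      _ ≤ (K:ℝ) * ∑ i ∈ A, (x i - m) ^ 2 := hCS
      _ = (∑ i ∈ A, (x i - m) ^ 2) * K := by ring
  have hB2 : ((n:ℝ) - K) * d ^ 2 ≤ ∑ i ∈ B, (x i - m) ^ 2 := by
    calc ((n:ℝ) - K) * d ^ 2 = ∑ _i ∈ B, d ^ 2 := by
          rw [Finset.sum_const, hcardB]
          have : ((n - K : ℕ) : ℝ) = (n:ℝ) - K := by
            have := hKn.le; push_cast [this]; ring
          rw [nsmul_eq_mul, this]
      _ ≤ ∑ i ∈ B, (x i - m) ^ 2 := by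
          apply Finset.sum_le_sum
          intro i hi
          have := hxB i hi
          nlinarith [hd0]
  have htot : ∑ i ∈ A, (x i - m) ^ 2 + ∑ i ∈ B, (x i - m) ^ 2 = (n:ℝ) * s ^ 2 := by
    rw [← Finset.sum_union hABdisj, ← hAB]; exact hsq
  -- conclude d^2 ≤ s^2 * (K/(n-K))
  have hd2 : d ^ 2 ≤ s ^ 2 * ((K:ℝ) / ((n:ℝ) - K)) := by
    have key : ((n:ℝ) - K) * d ^ 2 * ((n:ℝ)/K) ≤ (n:ℝ) * s ^ 2 := by
      have expand : (((n:ℝ) - K) * d) ^ 2 / K + ((n:ℝ) - K) * d ^ 2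
          = ((n:ℝ) - K) * d ^ 2 * ((n:ℝ)/K) := by
        field_simp; ring
      linarith [hA2, hB2, expand ▸ add_le_add hA2 hB2, htot]
    have h2 : d ^ 2 * ((n:ℝ) * ((n:ℝ) - K)) ≤ ((n:ℝ) * s ^ 2) * K := by
      have h3 := mul_le_mul_of_nonneg_right key hKR.le
      have heq : ((n:ℝ) - K) * d ^ 2 * ((n:ℝ)/K) * K = d ^ 2 * ((n:ℝ) * ((n:ℝ) - K)) := by
        field_simp
      linarith [heq ▸ h3]
    have h4 : d ^ 2 ≤ ((n:ℝ) * s ^ 2 * K) / ((n:ℝ) * ((n:ℝ) - K)) := by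
      rw [le_div_iff₀ (by positivity)]; exact h2
    have heq2 : ((n:ℝ) * s ^ 2 * K) / ((n:ℝ) * ((n:ℝ) - K)) = s ^ 2 * ((K:ℝ)/((n:ℝ)-K)) := by
      field_simp
    linarith [heq2 ▸ h4]
  -- finish: d ≤ s * sqrt(K/(n-K))
  have hfin : d ≤ s * Real.sqrt ((K:ℝ) / ((n:ℝ) - K)) := by
    have h1 : d = Real.sqrt (d ^ 2) := (Real.sqrt_sq hd0.le).symm
    rw [h1]
    calc Real.sqrt (d ^ 2) ≤ Real.sqrt (s ^ 2 * ((K:ℝ) / ((n:ℝ) - K))) :=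
          Real.sqrt_le_sqrt hd2
      _ = s * Real.sqrt ((K:ℝ) / ((n:ℝ) - K)) := by
          rw [Real.sqrt_mul (sq_nonneg s), Real.sqrt_sq hs0]
  have harg : ((k:ℝ) - 1) / ((n:ℝ) - k + 1) = (K:ℝ) / ((n:ℝ) - K) := by
    rw [hKk]; ring_nf
  rw [harg]
  linarith [hfin]
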